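/- For all real a > 0, b > 0, and c > 0, the integral ∫₀^∞ x · sin(ax) / ( (x²+b²)² + c² ) dx equals (π/(2c)) · e^{−a·A(b,c)} · sin(a·B(b,c)). -/

import Mathlib

open Real

/-- Dedekind eta function on the imaginary axis: `dedekindEtaI x = η(i x)`
for real `x > 0`, with `q = e^{-2πx}`. -/
noncomputable def dedekindEtaI (x : ℝ) : ℝ :=
  Real.exp (-(π * x) / 12) * ∏' n : ℕ, (1 - Real.exp (-(2 * π * x) * (n + 1)))

noncomputable def A (b c : ℝ) : ℝ := Real.sqrt ((Real.sqrt (b ^ 4 + c ^ 2) + b ^ 2) / 2)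

noncomputable def B (b c : ℝ) : ℝ := Real.sqrt ((Real.sqrt (b ^ 4 + c ^ 2) - b ^ 2) / 2)

/-- The character χ with χ(n)=0 for even n, 1 for n ≡ 1 (mod 4), −1 for n ≡ 3 (mod 4). -/
noncomputable def chi (n : ℕ) : ℝ :=
  if n % 2 = 0 then 0 else if n % 4 = 1 then 1 else -1

/-!
Let `z = A + B i`, so that `z² = b² + c i`. The odd function
`g t = sign t · (e^{-z|t|} - e^{-z̄|t|})` is integrable, and splitting its Fourier integral at
`0` into four Laplace integrals shows that `𝓕 g ξ = -4c w / ((w² + b²)² + c²)` with `w = 2πξ`,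
which is integrable. Fourier inversion at `t = a > 0` followed by taking imaginary parts gives
`c ∫_ℝ x sin(ax) / ((x² + b²)² + c²) dx = π e^{-aA} sin(aB)`, and the integrand is even.
-/

open MeasureTheory Set FourierTransform
open Complex (I normSq)
open scoped ComplexConjugate Complex RealInnerProductSpace

lemma Real.fourier_sub {V E : Type*} [NormedAddCommGroup V] [InnerProductSpace ℝ V]
    [MeasurableSpace V] [BorelSpace V] [FiniteDimensional ℝ V]
    [NormedAddCommGroup E] [NormedSpace ℂ E] {f g : V → E} (hf : Integrable f)
    (hg : Integrable g) (ξ : V) : 𝓕 (f - g) ξ = 𝓕 f ξ - 𝓕 g ξ := by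
  simp only [Real.fourier_eq, Pi.sub_apply, smul_sub]
  exact integral_sub ((Real.fourierIntegral_convergent_iff ξ).2 hf)
    ((Real.fourierIntegral_convergent_iff ξ).2 hg)

lemma inv_add_mul_I_sub_inv_sub_mul_I {u : ℂ} (hu : 0 < u.re) (w : ℝ) :
    (u + w * I)⁻¹ - (u - w * I)⁻¹ = -(2 * w * I) * (u ^ 2 + w ^ 2)⁻¹ := by
  have h₁ : u + w * I ≠ 0 := fun h ↦ by simpa [hu.ne'] using congrArg Complex.re h
  have h₂ : u - w * I ≠ 0 := fun h ↦ by simpa [hu.ne'] using congrArg Complex.re h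
  rw [show u ^ 2 + w ^ 2 = (u + w * I) * (u - w * I) by
    linear_combination (w : ℂ) ^ 2 * Complex.I_sq]
  field_simp
  ring

lemma integrable_div_sq_add_sq {p : ℝ} (hp : 0 < p) (q : ℝ) :
    Integrable fun w : ℝ ↦ w / ((w ^ 2 + p) ^ 2 + q ^ 2) := by
  have hD (w : ℝ) : 0 < (w ^ 2 + p) ^ 2 + q ^ 2 := by
    have := add_pos_of_nonneg_of_pos (sq_nonneg w) hp
    positivity
  refine (integrable_inv_one_add_sq.const_mul ((1 + p⁻¹) ^ 2)).mono'
    (continuous_id.div (by fun_prop) fun w ↦ (hD w).ne').aestronglyMeasurable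
    (.of_forall fun w ↦ ?_)
  have h₁ : 1 + w ^ 2 ≤ (1 + p⁻¹) * (w ^ 2 + p) := by
    field_simp
    nlinarith [sq_nonneg w]
  have key : |w| * (1 + w ^ 2) ≤ (1 + p⁻¹) ^ 2 * ((w ^ 2 + p) ^ 2 + q ^ 2) :=
    calc |w| * (1 + w ^ 2) ≤ (1 + w ^ 2) ^ 2 := by
          nlinarith [abs_nonneg w, sq_abs w, sq_nonneg (|w| - 1)]
      _ ≤ ((1 + p⁻¹) * (w ^ 2 + p)) ^ 2 := pow_le_pow_left₀ (by positivity) h₁ 2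
      _ ≤ (1 + p⁻¹) ^ 2 * ((w ^ 2 + p) ^ 2 + q ^ 2) := by
          nlinarith [sq_nonneg q, sq_nonneg (1 + p⁻¹)]
  rw [Real.norm_eq_abs, abs_div, abs_of_pos (hD w), div_le_iff₀ (hD w), mul_right_comm,
    ← div_eq_mul_inv, le_div_iff₀ (by positivity)]
  exact key

noncomputable def oddExp (z : ℂ) (t : ℝ) : ℂ := (Real.sign t : ℂ) * cexp (-(z * |t|))

lemma oddExp_of_pos (z : ℂ) {t : ℝ} (ht : 0 < t) : oddExp z t = cexp (-z * t) := by
  simp [oddExp, Real.sign_of_pos ht, abs_of_pos ht]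

lemma oddExp_of_neg (z : ℂ) {t : ℝ} (ht : t < 0) : oddExp z t = -cexp (z * t) := by
  simp [oddExp, Real.sign_of_neg ht, abs_of_neg ht]

lemma integrable_oddExp {z : ℂ} (hz : 0 < z.re) : Integrable (oddExp z) := by
  have hIoi : IntegrableOn (oddExp z) (Ioi 0) :=
    (integrableOn_exp_mul_complex_Ioi (a := -z) (by simpa) 0).congr_fun
      (fun t ht ↦ (oddExp_of_pos z ht).symm) measurableSet_Ioi
  have hIio : IntegrableOn (oddExp z) (Iio 0) :=
    ((integrableOn_exp_mul_complex_Iic hz 0).mono_set Iio_subset_Iic_self).neg.congr_fun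
      (fun t ht ↦ (oddExp_of_neg z ht).symm) measurableSet_Iio
  rw [← integrableOn_Iic_iff_integrableOn_Iio] at hIio
  simpa using hIio.union hIoi

lemma fourier_oddExp {z : ℂ} (hz : 0 < z.re) (ξ : ℝ) :
    𝓕 (oddExp z) ξ =
      (z + (2 * π * ξ : ℝ) * I)⁻¹ - (z - (2 * π * ξ : ℝ) * I)⁻¹ := by
  set w : ℝ := 2 * π * ξ
  have hint := (Real.fourierIntegral_convergent_iff (μ := volume) ξ).2 (integrable_oddExp hz)
  rw [Real.fourier_eq, ← integral_add_compl measurableSet_Iic hint, compl_Iic,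
    integral_Iic_eq_integral_Iio]
  have hIio : ∫ t in Iio (0 : ℝ), 𝐞 (-⟪t, ξ⟫) • oddExp z t = -(z - w * I)⁻¹ := by
    rw [setIntegral_congr_fun measurableSet_Iio (g := fun t : ℝ ↦ -cexp ((z - w * I) * t))
      fun t ht ↦ ?_]
    · rw [integral_neg, ← integral_Iic_eq_integral_Iio, integral_exp_mul_complex_Iic (by simpa)]
      simp
    · rw [oddExp_of_neg z ht, Circle.smul_def, Real.fourierChar_apply, smul_eq_mul, mul_neg,
        ← Complex.exp_add]
      congr 2
      simp [w]
      ring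
  have hIoi : ∫ t in Ioi (0 : ℝ), 𝐞 (-⟪t, ξ⟫) • oddExp z t = (z + w * I)⁻¹ := by
    rw [setIntegral_congr_fun measurableSet_Ioi (g := fun t : ℝ ↦ cexp (-(z + w * I) * t))
      fun t ht ↦ ?_]
    · rw [integral_exp_mul_complex_Ioi (by simpa), Complex.ofReal_zero, mul_zero,
        Complex.exp_zero, neg_div_neg_eq, one_div]
    · rw [oddExp_of_pos z ht, Circle.smul_def, Real.fourierChar_apply, smul_eq_mul,
        ← Complex.exp_add]
      congr 1
      simp [w]
      ring
  rw [hIio, hIoi]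
  ring

lemma fourier_oddExp_sub_conj {z : ℂ} (hz : 0 < z.re) (ξ : ℝ) :
    𝓕 (oddExp z - oddExp (conj z)) ξ = ((-(4 * (z ^ 2).im) *
      ((2 * π * ξ) / (((2 * π * ξ) ^ 2 + (z ^ 2).re) ^ 2 + (z ^ 2).im ^ 2)) : ℝ) : ℂ) := by
  have hzc : 0 < (conj z).re := by simpa
  rw [Real.fourier_sub (integrable_oddExp hz) (integrable_oddExp hzc), fourier_oddExp hz,
    fourier_oddExp hzc, inv_add_mul_I_sub_inv_sub_mul_I hz, inv_add_mul_I_sub_inv_sub_mul_I hzc]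
  generalize 2 * π * ξ = w
  have hconj : conj z ^ 2 + (w : ℂ) ^ 2 = conj (z ^ 2 + w ^ 2) := by simp
  have him : (z ^ 2 + (w : ℂ) ^ 2).im = (z ^ 2).im := by simp [← Complex.ofReal_pow]
  have hN : normSq (z ^ 2 + (w : ℂ) ^ 2) = (w ^ 2 + (z ^ 2).re) ^ 2 + (z ^ 2).im ^ 2 := by
    simp [Complex.normSq_apply, ← Complex.ofReal_pow]
    ring
  -- with `v = z² + w²`, the bracket is `v⁻¹ - conj v⁻¹ = 2 i Im v⁻¹ = -2 i Im v / |v|²`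
  rw [hconj, ← map_inv₀, ← mul_sub, Complex.sub_conj, Complex.inv_im, him, hN]
  push_cast
  linear_combination
    (4 * (z ^ 2).im * w / ((w ^ 2 + (z ^ 2).re) ^ 2 + (z ^ 2).im ^ 2) : ℂ) * Complex.I_sq

lemma integrable_fourier_oddExp_sub_conj {z : ℂ} (hz : 0 < z.re) (hp : 0 < (z ^ 2).re) :
    Integrable (𝓕 (oddExp z - oddExp (conj z))) := by
  rw [funext (fourier_oddExp_sub_conj hz)]
  exact (((integrable_div_sq_add_sq hp _).comp_mul_left' (R := 2 * π) (by positivity)).const_mul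
    _).ofReal

theorem integral_mul_sin_div {z : ℂ} (hz : 0 < z.re) (hp : 0 < (z ^ 2).re) {a : ℝ}
    (ha : 0 < a) :
    (z ^ 2).im * ∫ w : ℝ, w * Real.sin (a * w) / ((w ^ 2 + (z ^ 2).re) ^ 2 + (z ^ 2).im ^ 2)
      = π * Real.exp (-(a * z.re)) * Real.sin (a * z.im) := by
  set p := (z ^ 2).re
  set q := (z ^ 2).im
  set f : ℝ → ℝ := fun w ↦ w * Real.sin (a * w) / ((w ^ 2 + p) ^ 2 + q ^ 2)
  have hzc : 0 < (conj z).re := by simpa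
  set g : ℝ → ℂ := oddExp z - oddExp (conj z)
  have hg : Integrable g := (integrable_oddExp hz).sub (integrable_oddExp hzc)
  have hFg : 𝓕 g = fun ξ ↦
      ((-(4 * q) * ((2 * π * ξ) / (((2 * π * ξ) ^ 2 + p) ^ 2 + q ^ 2)) : ℝ) : ℂ) :=
    funext (fourier_oddExp_sub_conj hz)
  have hFg_int : Integrable (𝓕 g) := integrable_fourier_oddExp_sub_conj hz hp
  have hcont : ContinuousAt g a := by
    refine ContinuousAt.congr (f := fun t : ℝ ↦ cexp (-z * t) - cexp (-conj z * t))
      (by fun_prop) ?_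
    filter_upwards [Ioi_mem_nhds ha] with t ht
    simp [g, oddExp_of_pos _ ht]
  have hinv := hg.fourierInv_fourier_eq hFg_int hcont
  rw [Real.fourierInv_eq_fourier_neg, Real.fourier_eq] at hinv
  have him := congrArg Complex.im hinv
  rw [← RCLike.im_to_complex,
    ← integral_im ((Real.fourierIntegral_convergent_iff (-a)).2 hFg_int)] at him
  have hpt (ξ : ℝ) :
      RCLike.im (𝐞 (-⟪ξ, -a⟫) • 𝓕 g ξ) = -(4 * q) * f (2 * π * ξ) := by
    rw [hFg, Circle.smul_def, Real.fourierChar_apply, smul_eq_mul, RCLike.im_to_complex,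
      Complex.im_mul_ofReal, Complex.exp_ofReal_mul_I_im]
    simp only [f, RCLike.inner_apply, conj_trivial, neg_mul, neg_neg]
    rw [show 2 * π * (a * ξ) = a * (2 * π * ξ) by ring]
    ring
  have hga : (g a).im = -2 * Real.exp (-(a * z.re)) * Real.sin (a * z.im) := by
    simp [g, oddExp_of_pos _ ha, Complex.exp_im, mul_comm a]
    ring
  simp_rw [hpt, integral_const_mul, Measure.integral_comp_mul_left, hga] at him
  rw [abs_of_pos (by positivity), smul_eq_mul] at him
  field_simp at him
  linarith

theorem integral_Ioi_mul_sin_div {z : ℂ} (hz : 0 < z.re) (hp : 0 < (z ^ 2).re) {a : ℝ}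
    (ha : 0 < a) :
    (z ^ 2).im *
        ∫ x in Ioi (0 : ℝ), x * Real.sin (a * x) / ((x ^ 2 + (z ^ 2).re) ^ 2 + (z ^ 2).im ^ 2)
      = π / 2 * Real.exp (-(a * z.re)) * Real.sin (a * z.im) := by
  have h := integral_comp_abs
    (f := fun x ↦ x * Real.sin (a * x) / ((x ^ 2 + (z ^ 2).re) ^ 2 + (z ^ 2).im ^ 2))
  have heven (x : ℝ) : |x| * Real.sin (a * |x|) / ((|x| ^ 2 + (z ^ 2).re) ^ 2 + (z ^ 2).im ^ 2)
      = x * Real.sin (a * x) / ((x ^ 2 + (z ^ 2).re) ^ 2 + (z ^ 2).im ^ 2) := by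
    rcases abs_choice x with hx | hx <;> simp [hx]
  simp only [heven] at h
  linear_combination (integral_mul_sin_div hz hp ha - (z ^ 2).im * h) / 2

lemma sq_A_add_B_mul_I (b : ℝ) {c : ℝ} (hc : 0 ≤ c) :
    ((A b c : ℂ) + B b c * I) ^ 2 = b ^ 2 + c * I := by
  set s := √(b ^ 4 + c ^ 2)
  have hs : b ^ 2 ≤ s := Real.le_sqrt_of_sq_le (by nlinarith [sq_nonneg c])
  have hA : A b c ^ 2 = (s + b ^ 2) / 2 := Real.sq_sqrt (by positivity)
  have hB : B b c ^ 2 = (s - b ^ 2) / 2 := Real.sq_sqrt (by linarith)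
  have hAB : A b c * B b c = c / 2 := by
    have hprod : (s + b ^ 2) / 2 * ((s - b ^ 2) / 2) = (c / 2) ^ 2 := by
      have : s ^ 2 = b ^ 4 + c ^ 2 := Real.sq_sqrt (by positivity)
      linear_combination this / 4
    rw [A, B, ← Real.sqrt_mul (by positivity), hprod, Real.sqrt_sq (by positivity)]
  calc ((A b c : ℂ) + B b c * I) ^ 2
      = ((A b c ^ 2 - B b c ^ 2 : ℝ) : ℂ) + (2 * (A b c * B b c) : ℝ) * I := by
        push_cast
        linear_combination (B b c : ℂ) ^ 2 * Complex.I_sq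
    _ = b ^ 2 + c * I := by
        rw [hA, hB, hAB]
        push_cast
        ring

lemma A_pos {b : ℝ} (hb : b ≠ 0) (c : ℝ) : 0 < A b c :=
  Real.sqrt_pos.2 (by positivity)

theorem gr_integral_sin (a b c : ℝ) (ha : 0 < a) (hb : 0 < b) (hc : 0 < c) :
    ∫ x in Set.Ioi (0 : ℝ), x * Real.sin (a * x) / ((x ^ 2 + b ^ 2) ^ 2 + c ^ 2)
      = (π / (2 * c)) * Real.exp (-(a * A b c)) * Real.sin (a * B b c) := by
  set z : ℂ := A b c + B b c * I
  have hz : z ^ 2 = b ^ 2 + c * I := sq_A_add_B_mul_I b hc.le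
  have hzre : z.re = A b c := by simp [z]
  have hzim : z.im = B b c := by simp [z]
  have hre : (z ^ 2).re = b ^ 2 := by simp [hz, ← Complex.ofReal_pow]
  have him : (z ^ 2).im = c := by simp [hz, ← Complex.ofReal_pow]
  have key := integral_Ioi_mul_sin_div (z := z) (hzre ▸ A_pos hb.ne' c)
    (by rw [hre]; positivity) ha
  rw [hre, him, hzre, hzim] at key
  apply mul_left_cancel₀ hc.ne'
  rw [key]
  field_simp
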